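/- Let R be a commutative ring with unity, k ≥ 2 an integer, a_1,…,a_k ∈ R with (a_1)+⋯+(a_k) = R, and E a finite set of maximal ideals of R. Then there exists a in the ideal (a_2,…,a_k) such that a_1 + a ∉ M for all M ∈ E. -/

import Mathlib

/-!
Write `x = a₁` and `I = (a₂, …, a_k)`, so that `(x) + I = R`. For `M ∈ E` with `x ∉ M` we want
`b ∈ M`, and for `M ∈ E` with `x ∈ M` we want `b ∉ M`. Look for `b` in
`J = I · ∏ {M ∈ E | x ∉ M}`: it lies in every ideal of the first kind and in none of the second,
since such an `M` is prime and contains neither `I` (as `(x) + I = R`) nor any other maximal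
ideal. Prime avoidance then gives `b ∈ J` outside the finitely many ideals of the second kind.
-/

namespace Ideal

variable {R : Type*} [CommRing R]

theorem span_singleton_sup_span_image_ne_eq_top {ι : Type*} [Fintype ι] {a : ι → R}
    (ha : ∑ i, span {a i} = ⊤) (i₀ : ι) : span {a i₀} ⊔ span (a '' {i | i ≠ i₀}) = ⊤ := by
  rw [eq_top_iff, ← ha, sum_eq_sup]
  refine Finset.sup_le fun i _ => ?_
  by_cases hi : i = i₀
  · exact hi ▸ le_sup_left
  · exact le_sup_of_le_right (span_mono (Set.singleton_subset_iff.2 (Set.mem_image_of_mem a hi)))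

theorem prod_le_iff_mem_of_isMaximal {S : Finset (Ideal R)} (hS : ∀ M ∈ S, M.IsMaximal)
    {P : Ideal R} (hP : P.IsPrime) : ∏ M ∈ S, M ≤ P ↔ P ∈ S := by
  refine ⟨fun h => ?_, fun h => prod_le_inf.trans (Finset.inf_le h)⟩
  obtain ⟨M, hMS, hMP⟩ := hP.prod_le.1 h
  exact (hS M hMS).eq_of_le hP.ne_top hMP ▸ hMS

theorem exists_mem_forall_notMem_of_forall_not_le {I : Ideal R} {S : Finset (Ideal R)}
    (hS : ∀ P ∈ S, P.IsPrime) (hI : ∀ P ∈ S, ¬I ≤ P) : ∃ b ∈ I, ∀ P ∈ S, b ∉ P := by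
  have : ¬(I : Set R) ⊆ ⋃ P ∈ (S : Set (Ideal R)), (P : Set R) := by
    rw [subset_union_prime ⊥ ⊥ fun P hP _ _ => hS P hP]
    simpa using hI
  simpa using Set.not_subset.1 this

theorem exists_add_notMem_of_span_singleton_sup_eq_top {x : R} {I : Ideal R}
    (h : span {x} ⊔ I = ⊤) {E : Finset (Ideal R)} (hE : ∀ M ∈ E, M.IsMaximal) :
    ∃ b ∈ I, ∀ M ∈ E, x + b ∉ M := by
  classical
  set J := I * ∏ M ∈ E.filter (x ∉ ·), M
  have hprod (M : Ideal R) (hM : M.IsPrime) :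
      ∏ N ∈ E.filter (x ∉ ·), N ≤ M ↔ M ∈ E.filter (x ∉ ·) :=
    prod_le_iff_mem_of_isMaximal (fun N hN => hE N (Finset.mem_filter.1 hN).1) hM
  have hJ_not_le : ∀ M ∈ E.filter (x ∈ ·), ¬J ≤ M := by
    intro M hM hJM
    obtain ⟨hME, hxM⟩ := Finset.mem_filter.1 hM
    have hMmax := hE M hME
    rcases hMmax.isPrime.mul_le.1 hJM with hIM | hprodM
    · have hsup : span {x} ⊔ I ≤ M := sup_le ((span_singleton_le_iff_mem M).2 hxM) hIM
      exact hMmax.ne_top (top_le_iff.1 (h ▸ hsup))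
    · exact (Finset.mem_filter.1 ((hprod M hMmax.isPrime).1 hprodM)).2 hxM
  obtain ⟨b, hbJ, hb⟩ := exists_mem_forall_notMem_of_forall_not_le
    (fun M hM => (hE M (Finset.mem_filter.1 hM).1).isPrime) hJ_not_le
  refine ⟨b, mul_le_left hbJ, fun M hME hxbM => ?_⟩
  by_cases hxM : x ∈ M
  · exact hb M (Finset.mem_filter.2 ⟨hME, hxM⟩) ((Ideal.add_mem_iff_right M hxM).1 hxbM)
  · have hbM : b ∈ M :=
      mul_le_right.trans ((hprod M (hE M hME).isPrime).2 (Finset.mem_filter.2 ⟨hME, hxM⟩)) hbJ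
    exact hxM ((Ideal.add_mem_iff_left M hbM).1 hxbM)

end Ideal

/-- Let `R` be a commutative ring with unity, `k ≥ 2`, `a_1, …, a_k ∈ R` with
`(a_1) + ⋯ + (a_k) = R`, and `E` a finite set of maximal ideals of `R`. Then there exists
`a` in the ideal `(a_2, …, a_k)` such that `a_1 + a ∉ M` for all `M ∈ E`. -/
theorem unital_lemma {R : Type*} [CommRing R] (k : ℕ) (hk : 2 ≤ k) (a : Fin k → R)
    (ha : ∑ i, Ideal.span {a i} = ⊤)
    (E : Finset (Ideal R)) (hE : ∀ M ∈ E, M.IsMaximal) :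
    ∃ b ∈ Ideal.span (a '' {i | (i : ℕ) ≠ 0}), ∀ M ∈ E, a ⟨0, by omega⟩ + b ∉ M := by
  have hset : {i : Fin k | (i : ℕ) ≠ 0} = {i | i ≠ ⟨0, by omega⟩} := by
    simp [Fin.ext_iff]
  rw [hset]
  exact Ideal.exists_add_notMem_of_span_singleton_sup_eq_top
    (Ideal.span_singleton_sup_span_image_ne_eq_top ha _) hE
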